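/- arXiv:1106.5985 — 2 statements merged into one kernel-verified Lean document; each statement's English description precedes it below -/
import Mathlib

section
/- Let E₁, …, E_m be subspaces of ℝⁿ with c₁, …, c_m > 0 satisfying Σᵢ cᵢ P_{Eᵢ} = Id. Then for every symmetric n×n real matrix H, the squared Hilbert–Schmidt (Frobenius) norm satisfies ‖H‖² ≥ Σᵢ cᵢ ‖P_{Eᵢ} H P_{Eᵢ}‖², where ‖A‖² = Tr(AᵀA). -/
open Matrix

lemma traceBBt_nonneg {n : ℕ} (B : Matrix (Fin n) (Fin n) ℝ) : 0 ≤ (B * Bᵀ).trace := by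
  rw [Matrix.trace]
  refine Finset.sum_nonneg fun i _ => ?_
  rw [Matrix.diag_apply, Matrix.mul_apply]
  exact Finset.sum_nonneg fun j _ => by simp [Matrix.transpose_apply, mul_self_nonneg]

lemma key {n : ℕ} (P H : Matrix (Fin n) (Fin n) ℝ) (hP : P.IsSymm) (hPi : P * P = P)
    (hH : H.IsSymm) : ((P * H * P)ᵀ * (P * H * P)).trace ≤ (P * (H * H)).trace := by
  have hPt : Pᵀ = P := hP
  have hHt : Hᵀ = H := hH
  set B := P * H * (1 - P) with hB
  have hBt : Bᵀ = (1 - P) * H * P := by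
    simp [hB, Matrix.transpose_mul, hPt, hHt, Matrix.transpose_sub, Matrix.mul_assoc]
  have hexp : B * Bᵀ = P * (H * H) * P - P * H * P * H * P := by
    rw [hBt, hB]
    have hQ : (1 - P) * (1 - P) = 1 - P := by
      rw [Matrix.mul_sub, Matrix.sub_mul, Matrix.sub_mul, hPi]
      simp
    have h1 : (1 - P) * ((1 - P) * H * P) = (1 - P) * H * P := by
      rw [← Matrix.mul_assoc, ← Matrix.mul_assoc, hQ]
    rw [Matrix.mul_assoc (P * H), h1]
    noncomm_ring
  have h0 := traceBBt_nonneg B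
  rw [hexp, Matrix.trace_sub] at h0
  have heq : ((P * H * P)ᵀ * (P * H * P)).trace = (P * H * P * H * P).trace := by
    have h2 : (P * H * P)ᵀ * (P * H * P) = P * H * (P * P) * H * P := by
      rw [Matrix.transpose_mul, Matrix.transpose_mul, hPt, hHt]
      noncomm_ring
    rw [h2, hPi]
  have heq2 : (P * (H * H) * P).trace = (P * (H * H)).trace := by
    rw [Matrix.trace_mul_comm, ← Matrix.mul_assoc, ← Matrix.mul_assoc, hPi, Matrix.mul_assoc]
  rw [heq2] at h0
  linarith [h0, heq ▸ le_refl ((P * H * P)ᵀ * (P * H * P)).trace]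

/-- A symmetric idempotent real matrix is exactly an orthogonal projection matrix. -/
theorem stmt3 (n m : ℕ)
    (P : Fin m → Matrix (Fin n) (Fin n) ℝ)
    (hPsymm : ∀ i, (P i).IsSymm) (hPidem : ∀ i, P i * P i = P i)
    (c : Fin m → ℝ) (hc : ∀ i, 0 < c i)
    (hdec : ∑ i, c i • P i = 1)
    (H : Matrix (Fin n) (Fin n) ℝ) (hH : H.IsSymm) :
    (Hᵀ * H).trace ≥
      ∑ i, c i * ((P i * H * P i)ᵀ * (P i * H * P i)).trace := by
  have hHt : Hᵀ = H := hH
  rw [hHt]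
  have hL : (H * H).trace = ∑ i, c i * (P i * (H * H)).trace := by
    calc (H * H).trace = ((∑ i, c i • P i) * (H * H)).trace := by rw [hdec, Matrix.one_mul]
    _ = ∑ i, c i * (P i * (H * H)).trace := by
        rw [Finset.sum_mul, Matrix.trace_sum]
        simp [Matrix.smul_mul, Matrix.trace_smul]
  rw [hL]
  refine Finset.sum_le_sum fun i _ => ?_
  exact mul_le_mul_of_nonneg_left (key (P i) H (hPsymm i) (hPidem i) hH) (hc i).le
end

section
/- Let μ be a probability measure on ℝⁿ with continuous density ρ invariant under an isometry R ∈ O(n) (ρ∘R = ρ), and let g : ℝⁿ → ℝ be a C¹ R-invariant function (g∘R = g). Set E = Fix(R)⊥. Then for every x ∈ ℝⁿ, the conditional measure μ_{x,E} on the affine slice x + E (with density proportional to y ↦ ρ(P_{E⊥}x + y) on E) satisfies ∫_E P_E ∇g(y) dμ_{x,E}(y) = 0. -/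
/-!
The orthogonal map `R` preserves `ρ`, commutes with `∇g` (as `g ∘ R = g`) and with `P_E`
(as `R E = E`), and fixes `P_{E⊥} x`; moreover it restricts to an isometry `S` of the
parameter space of the slice. The change of variables `y ↦ S y` therefore shows that the
integral is a vector of `E` fixed by `R`, i.e. an element of `Fix(R) ∩ Fix(R)⊥ = 0`.
-/

open MeasureTheory InnerProductSpace

section

variable {𝕜 V W : Type*} [RCLike 𝕜] [NormedAddCommGroup V] [InnerProductSpace 𝕜 V]
  [NormedAddCommGroup W] [InnerProductSpace 𝕜 W]

theorem Submodule.map_eq_self_of_forall_apply_eq (R : V ≃ₗᵢ[𝕜] V) {F : Submodule 𝕜 V}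
    (hF : ∀ v ∈ F, R v = v) : F.map (R.toLinearEquiv : V →ₗ[𝕜] V) = F := by
  ext v
  refine ⟨?_, fun hv => ⟨v, hv, hF v hv⟩⟩
  rintro ⟨w, hw, rfl⟩
  simpa [hF w hw] using hw

theorem Submodule.starProjection_apply_of_map_eq (R : V ≃ₗᵢ[𝕜] V) (K : Submodule 𝕜 V)
    [K.HasOrthogonalProjection] (hK : K.map (R.toLinearEquiv : V →ₗ[𝕜] V) = K) (v : V) :
    K.starProjection (R v) = R (K.starProjection v) := by
  have := K.starProjection_map_apply R (R v)
  simp only [LinearIsometryEquiv.symm_apply_apply] at this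
  rw [← this]
  congr!
  exact hK.symm

theorem LinearIsometry.exists_equiv_comp_eq_of_map_range_eq (ι : V →ₗᵢ[𝕜] W) (R : W ≃ₗᵢ[𝕜] W)
    (hR : (LinearMap.range ι.toLinearMap).map (R.toLinearEquiv : W →ₗ[𝕜] W) =
      LinearMap.range ι.toLinearMap) :
    ∃ S : V ≃ₗᵢ[𝕜] V, ∀ v, ι (S v) = R (ι v) :=
  ⟨ι.equivRange.trans ((LinearIsometryEquiv.submoduleMap _ R).trans
    ((LinearIsometryEquiv.ofEq _ _ (by exact hR)).trans ι.equivRange.symm)), fun v => by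
      simp only [LinearIsometryEquiv.trans_apply]
      rw [← ι.equivRange_apply_coe, LinearIsometryEquiv.apply_symm_apply]
      rfl⟩

variable [CompleteSpace V] [CompleteSpace W]

theorem gradient_comp_linearIsometryEquiv (R : V ≃ₗᵢ[𝕜] W) (g : W → 𝕜) (v : V) :
    gradient (g ∘ R) v = R.symm (gradient g (R v)) := by
  apply (toDual 𝕜 V).injective
  ext u
  simp only [gradient, LinearIsometryEquiv.apply_symm_apply, toDual_apply_apply]
  rw [← R.inner_map_map, R.apply_symm_apply, toDual_symm_apply]
  exact congrArg (· u) (R.toContinuousLinearEquiv.comp_right_fderiv (f := g) (x := v))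

theorem gradient_apply_eq_of_invariant (R : V ≃ₗᵢ[𝕜] V) {g : V → 𝕜} (hg : ∀ v, g (R v) = g v)
    (v : V) : gradient g (R v) = R (gradient g v) := by
  have := gradient_comp_linearIsometryEquiv R g v
  rw [show g ∘ R = g from funext hg] at this
  rw [this, R.apply_symm_apply]

end

section

variable {V W X : Type*} [NormedAddCommGroup V] [InnerProductSpace ℝ V] [FiniteDimensional ℝ V]
  [MeasurableSpace V] [BorelSpace V] [NormedAddCommGroup W] [NormedSpace ℝ W] [CompleteSpace W]

theorem LinearIsometryEquiv.apply_integral_eq_of_intertwine (S : V ≃ₗᵢ[ℝ] V) (R : W ≃ₗᵢ[ℝ] W)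
    {f : V → W} (hf : ∀ v, f (S v) = R (f v)) : R (∫ v, f v) = ∫ v, f v := by
  calc R (∫ v, f v) = ∫ v, R (f v) := (R.toLinearIsometry.integral_comp_comm f).symm
    _ = ∫ v, f (S v) := by simp only [hf]
    _ = ∫ v, f v := integral_comp S f

theorem Submodule.integral_mem [MeasurableSpace X] {μ : Measure X} (K : Submodule ℝ W)
    [CompleteSpace K] {f : X → W} (hf : ∀ x, f x ∈ K) : ∫ x, f x ∂μ ∈ K := by
  rw [show ∫ x, f x ∂μ = K.subtypeₗᵢ (∫ x, ⟨f x, hf x⟩ ∂μ) from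
    K.subtypeₗᵢ.integral_comp_comm (fun x => (⟨f x, hf x⟩ : K))]
  exact coe_mem _

end

/-- The slice `P_{E⊥}x + E` is parametrized by the linear isometry `ι` with range `E`, and the
normalizing constant of `μ_{x,E}` is dropped. -/
theorem stmt16_general (n k : ℕ)
    (ρ : EuclideanSpace ℝ (Fin n) → ℝ)
    (R : EuclideanSpace ℝ (Fin n) ≃ₗᵢ[ℝ] EuclideanSpace ℝ (Fin n))
    (hρinv : ∀ x, ρ (R x) = ρ x)
    (g : EuclideanSpace ℝ (Fin n) → ℝ)
    (hginv : ∀ x, g (R x) = g x)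
    (F E : Submodule ℝ (EuclideanSpace ℝ (Fin n)))
    (hF : ∀ x, x ∈ F ↔ R x = x) (hE : E = Fᗮ)
    (ι : EuclideanSpace ℝ (Fin k) →ₗᵢ[ℝ] EuclideanSpace ℝ (Fin n))
    (hι : LinearMap.range ι.toLinearMap = E) :
    ∀ x : EuclideanSpace ℝ (Fin n),
      (∫ y : EuclideanSpace ℝ (Fin k),
        ρ ((Submodule.orthogonalProjection F x : EuclideanSpace ℝ (Fin n)) + ι y) •
          (Submodule.orthogonalProjection E
            (gradient g ((Submodule.orthogonalProjection F x : EuclideanSpace ℝ (Fin n)) + ι y)) :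
              EuclideanSpace ℝ (Fin n)))
        = 0 := by
  intro x
  set c := (F.orthogonalProjectionOnto x : EuclideanSpace ℝ (Fin n))
  set I := ∫ y, ρ (c + ι y) •
    (E.orthogonalProjectionOnto (gradient g (c + ι y)) : EuclideanSpace ℝ (Fin n))
  have hRF : ∀ v ∈ F, R v = v := fun v => (hF v).1
  have hRc : R c = c := hRF c (F.orthogonalProjectionOnto x).2
  have hRE : E.map (R.toLinearEquiv : _ →ₗ[ℝ] _) = E := by
    rw [hE, Submodule.map_orthogonal_equiv, Submodule.map_eq_self_of_forall_apply_eq R hRF]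
  obtain ⟨S, hS⟩ := ι.exists_equiv_comp_eq_of_map_range_eq R (hι ▸ hRE)
  have hRI : R I = I := LinearIsometryEquiv.apply_integral_eq_of_intertwine S R fun y => by
    have hpt : c + ι (S y) = R (c + ι y) := by rw [hS, map_add, hRc]
    simp only [hpt, hρinv, gradient_apply_eq_of_invariant R hginv, map_smul,
      ← Submodule.starProjection_apply, E.starProjection_apply_of_map_eq R hRE]
  have hIE : I ∈ E := E.integral_mem fun y => E.smul_mem _ (Submodule.coe_mem _)
  exact (Submodule.orthogonal_disjoint F).le_bot ⟨(hF I).2 hRI, hE ▸ hIE⟩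

/-- The conditional measure `μ_{x,E}` on the slice `P_{E⊥}x + E` (with density proportional
to `y ↦ ρ(P_{E⊥}x + y)`) gives mean zero to `P_E ∇g`; here `E = Fix(R)⊥`, so `E⊥ = Fix(R)`
and the slice is parametrized by a linear isometry `ι` with range `E`. -/
theorem stmt16 (n k : ℕ)
    (ρ : EuclideanSpace ℝ (Fin n) → ℝ) (hρcont : Continuous ρ) (hρpos : ∀ x, 0 ≤ ρ x)
    (hρprob : ∫ x, ρ x = 1)
    (R : EuclideanSpace ℝ (Fin n) ≃ₗᵢ[ℝ] EuclideanSpace ℝ (Fin n))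
    (hρinv : ∀ x, ρ (R x) = ρ x)
    (g : EuclideanSpace ℝ (Fin n) → ℝ) (hg : ContDiff ℝ 1 g)
    (hginv : ∀ x, g (R x) = g x)
    (F E : Submodule ℝ (EuclideanSpace ℝ (Fin n)))
    (hF : ∀ x, x ∈ F ↔ R x = x) (hE : E = Fᗮ)
    (ι : EuclideanSpace ℝ (Fin k) →ₗᵢ[ℝ] EuclideanSpace ℝ (Fin n))
    (hι : LinearMap.range ι.toLinearMap = E) :
    ∀ x : EuclideanSpace ℝ (Fin n),
      (∫ y : EuclideanSpace ℝ (Fin k),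
        ρ ((Submodule.orthogonalProjection F x : EuclideanSpace ℝ (Fin n)) + ι y) •
          (Submodule.orthogonalProjection E
            (gradient g ((Submodule.orthogonalProjection F x : EuclideanSpace ℝ (Fin n)) + ι y)) :
              EuclideanSpace ℝ (Fin n)))
        = 0 :=
  stmt16_general n k ρ R hρinv g hginv F E hF hE ι hι
end
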